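/- arXiv:1012.4255 — 3 statements merged into one kernel-verified Lean document; each statement's English description precedes it below -/
import Mathlib

section
/- Let (X,Y) be a pair of square-integrable real random variables and let (X₁,Y₁), (X₂,Y₂) be independent copies of (X,Y). Set ΔX = X₁−X₂ and ΔY = Y₁−Y₂. Suppose that P(ΔX = 0) = 0 and that the conditional distribution of ΔY given ΔX is almost surely symmetric about 0 and almost surely assigns zero mass to {0}. Then Cov(X,Y) = 0 and P(ΔX > 0, ΔY > 0) = 1/4; in particular E(ω) = P(X₁<X₂, Y₁<Y₂) − 1/4 = 0. -/
open MeasureTheory ProbabilityTheory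

def IsSymmetricAboutZero (μ : Measure ℝ) : Prop :=
  μ.map (fun x => -x) = μ

/-!
Disintegrate the law of `(ΔX, ΔY)` as the law `μ` of `ΔX` composed with the conditional
distribution of `ΔY`. Conditional symmetry makes this law invariant under `(x, y) ↦ (x, -y)`,
so `Cov(ΔX, ΔY) = 0`, while `Cov(ΔX, ΔY) = 2 Cov(X, Y)` since the cross covariances of the
independent copies vanish. The copies are exchangeable, so `μ` is symmetric; having no atom at
`0`, it gives mass `1/2` to each half-line, as do almost all conditional distributions, so each
quadrant `{ΔX > 0, ΔY > 0}`, `{ΔX < 0, ΔY < 0}` has probability `1/2 · 1/2`.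
-/

open Set
open scoped ENNReal

namespace IsSymmetricAboutZero

variable {ν : Measure ℝ}

lemma measure_Iio_eq_measure_Ioi (hν : IsSymmetricAboutZero ν) : ν (Iio 0) = ν (Ioi 0) := by
  conv_lhs => rw [← hν]
  rw [Measure.map_apply measurable_neg measurableSet_Iio]
  congr 1
  ext x
  simp

lemma measure_Ioi_eq_half [IsProbabilityMeasure ν] (hν : IsSymmetricAboutZero ν)
    (h0 : ν {0} = 0) : ν (Ioi 0) = 2⁻¹ := by
  have hsum : ν (Iio 0) + ν (Ioi 0) = 1 := by
    rw [← measure_union Ioi_disjoint_Iio_same.symm measurableSet_Ioi, Iio_union_Ioi,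
      measure_compl (measurableSet_singleton 0) (measure_ne_top _ _), h0, measure_univ,
      tsub_zero]
  rw [hν.measure_Iio_eq_measure_Ioi, ← two_mul, mul_comm] at hsum
  exact ENNReal.eq_inv_of_mul_eq_one_left hsum

lemma measure_Iio_eq_half [IsProbabilityMeasure ν] (hν : IsSymmetricAboutZero ν)
    (h0 : ν {0} = 0) : ν (Iio 0) = 2⁻¹ := by
  rw [hν.measure_Iio_eq_measure_Ioi, hν.measure_Ioi_eq_half h0]

end IsSymmetricAboutZero

namespace ProbabilityTheory

section

variable {Ω Ω' : Type*} [MeasurableSpace Ω] [MeasurableSpace Ω'] {μ : Measure Ω} {ν : Measure Ω'}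

lemma IdentDistrib.covariance_eq {X Y : Ω → ℝ} {X' Y' : Ω' → ℝ}
    (h : IdentDistrib (fun ω => (X ω, Y ω)) (fun ω => (X' ω, Y' ω)) μ ν) :
    cov[X, Y; μ] = cov[X', Y'; ν] := by
  rw [← covariance_map_fun (X := Prod.fst) (Y := Prod.snd) measurable_fst.aestronglyMeasurable
      measurable_snd.aestronglyMeasurable h.aemeasurable_fst, h.map_eq,
    covariance_map_fun measurable_fst.aestronglyMeasurable measurable_snd.aestronglyMeasurable
      h.aemeasurable_snd]

end

variable {Ω : Type*} [MeasurableSpace Ω] {P : Measure Ω} [IsFiniteMeasure P]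

lemma covariance_sub_sub_eq_two_mul_of_indep_copies {X Y X₁ Y₁ X₂ Y₂ : Ω → ℝ}
    (hX : MemLp X 2 P) (hY : MemLp Y 2 P)
    (h₁ : IdentDistrib (fun ω => (X₁ ω, Y₁ ω)) (fun ω => (X ω, Y ω)) P P)
    (h₂ : IdentDistrib (fun ω => (X₂ ω, Y₂ ω)) (fun ω => (X ω, Y ω)) P P)
    (hindep : IndepFun (fun ω => (X₁ ω, Y₁ ω)) (fun ω => (X₂ ω, Y₂ ω)) P) :
    cov[fun ω => X₁ ω - X₂ ω, fun ω => Y₁ ω - Y₂ ω; P] = 2 * cov[X, Y; P] := by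
  have hX₁ : MemLp X₁ 2 P := (h₁.comp measurable_fst).memLp_iff.mpr hX
  have hY₁ : MemLp Y₁ 2 P := (h₁.comp measurable_snd).memLp_iff.mpr hY
  have hX₂ : MemLp X₂ 2 P := (h₂.comp measurable_fst).memLp_iff.mpr hX
  have hY₂ : MemLp Y₂ 2 P := (h₂.comp measurable_snd).memLp_iff.mpr hY
  have hX₁Y₂ : IndepFun X₁ Y₂ P := hindep.comp measurable_fst measurable_snd
  have hX₂Y₁ : IndepFun X₂ Y₁ P := hindep.symm.comp measurable_fst measurable_snd
  rw [covariance_fun_sub_fun_sub hX₁ hX₂ hY₁ hY₂, h₁.covariance_eq, h₂.covariance_eq,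
    hX₁Y₂.covariance_eq_zero hX₁ hY₂, hX₂Y₁.covariance_eq_zero hX₂ hY₁]
  ring

lemma IndepFun.isSymmetricAboutZero_map_sub {U V : Ω → ℝ}
    (hUV : IndepFun U V P) (hU : Measurable U) (hV : Measurable V) (hlaw : P.map U = P.map V) :
    IsSymmetricAboutZero (P.map fun ω => U ω - V ω) := by
  have hswap : P.map (fun ω => (V ω, U ω)) = P.map (fun ω => (U ω, V ω)) := by
    rw [(indepFun_iff_map_prod_eq_prod_map_map hU.aemeasurable hV.aemeasurable).mp hUV,
      (indepFun_iff_map_prod_eq_prod_map_map hV.aemeasurable hU.aemeasurable).mp hUV.symm, hlaw]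
  have hsub : Measurable fun p : ℝ × ℝ => p.1 - p.2 := measurable_fst.sub measurable_snd
  have hUsubV : Measurable fun ω => U ω - V ω := hU.sub hV
  calc (P.map fun ω => U ω - V ω).map (fun x => -x)
      = (P.map fun ω => (V ω, U ω)).map fun p => p.1 - p.2 := by
        rw [Measure.map_map measurable_neg hUsubV,
          Measure.map_map hsub (hV.prodMk hU)]
        congr 1
        funext ω
        simp [Function.comp]
    _ = P.map fun ω => U ω - V ω := by
        rw [hswap, Measure.map_map hsub (hU.prodMk hV)]
        rfl

section

variable {α β : Type*} [MeasurableSpace α] [MeasurableSpace β] [StandardBorelSpace β]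
  [Nonempty β]

lemma measure_preimage_inter_eq_mul_of_condDistrib {U : Ω → α} {V : Ω → β}
    (hU : Measurable U) (hV : Measurable V) {s : Set α} {t : Set β} (hs : MeasurableSet s)
    (ht : MeasurableSet t) {c : ℝ≥0∞} (hc : ∀ᵐ x ∂P.map U, condDistrib V U P x t = c) :
    P (U ⁻¹' s ∩ V ⁻¹' t) = P (U ⁻¹' s) * c := by
  calc P (U ⁻¹' s ∩ V ⁻¹' t) = (P.map U ⊗ₘ condDistrib V U P) (s ×ˢ t) := by
        rw [compProd_map_condDistrib hV.aemeasurable,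
          Measure.map_apply (hU.prodMk hV) (hs.prod ht)]
        rfl
    _ = ∫⁻ x in s, c ∂P.map U := by
        rw [Measure.compProd_apply_prod hs ht]
        exact setLIntegral_congr_fun_ae hs (hc.mono fun x hx _ => hx)
    _ = P (U ⁻¹' s) * c := by
        rw [setLIntegral_const, Measure.map_apply hU hs, mul_comm]

end

lemma covariance_eq_zero_of_condDistrib_symm {U V : Ω → ℝ}
    (hU : Measurable U) (hV : Measurable V)
    (h : ∀ᵐ x ∂P.map U, IsSymmetricAboutZero (condDistrib V U P x)) :
    cov[U, V; P] = 0 := by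
  set ρ := P.map fun ω => (U ω, V ω)
  have hρ : ρ.map (Prod.map id fun y => -y) = ρ := by
    rw [show ρ = _ from (compProd_map_condDistrib hV.aemeasurable).symm,
      ← Measure.compProd_map measurable_neg]
    refine Measure.compProd_congr ?_
    filter_upwards [h] with x hx
    rw [Kernel.map_apply _ measurable_neg]
    exact hx
  have hcov : cov[U, V; P] = cov[Prod.fst, Prod.snd; ρ] :=
    (covariance_map measurable_fst.aestronglyMeasurable measurable_snd.aestronglyMeasurable
      (hU.prodMk hV).aemeasurable).symm
  have hneg : cov[Prod.fst, Prod.snd; ρ] = -cov[Prod.fst, Prod.snd; ρ] := by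
    conv_lhs => rw [← hρ]
    rw [covariance_map_fun measurable_fst.aestronglyMeasurable
      measurable_snd.aestronglyMeasurable (measurable_id.prodMap measurable_neg).aemeasurable]
    exact covariance_fun_neg_right
  linarith

end ProbabilityTheory

/-- **If the conditional distribution of `ΔY = Y₁ - Y₂` given `ΔX = X₁ - X₂` is a.s. symmetric
about `0` (and atomless at `0`, with `ΔX ≠ 0` a.s.), then `Cov(X,Y) = 0`,
`P(ΔX > 0, ΔY > 0) = 1/4`, and `E(ω) = P(X₁<X₂, Y₁<Y₂) - 1/4 = 0`.** -/
theorem cov_eq_zero_and_rank_corr_eq_zero_of_condDistrib_symm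
    {Ω : Type*} [MeasurableSpace Ω] (P : Measure Ω) [IsProbabilityMeasure P]
    (X Y X₁ Y₁ X₂ Y₂ : Ω → ℝ)
    (hX : Measurable X) (hY : Measurable Y)
    (hX₁ : Measurable X₁) (hY₁ : Measurable Y₁) (hX₂ : Measurable X₂) (hY₂ : Measurable Y₂)
    (hXL2 : MemLp X 2 P) (hYL2 : MemLp Y 2 P)
    (hindep : IndepFun (fun ω => (X₁ ω, Y₁ ω)) (fun ω => (X₂ ω, Y₂ ω)) P)
    (hcopy₁ : P.map (fun ω => (X₁ ω, Y₁ ω)) = P.map (fun ω => (X ω, Y ω)))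
    (hcopy₂ : P.map (fun ω => (X₂ ω, Y₂ ω)) = P.map (fun ω => (X ω, Y ω)))
    (hΔXne : P {ω | X₁ ω - X₂ ω = 0} = 0)
    (hcond : ∀ᵐ x ∂(P.map (fun ω => X₁ ω - X₂ ω)),
      IsSymmetricAboutZero
          (condDistrib (fun ω => Y₁ ω - Y₂ ω) (fun ω => X₁ ω - X₂ ω) P x) ∧
        condDistrib (fun ω => Y₁ ω - Y₂ ω) (fun ω => X₁ ω - X₂ ω) P x {0} = 0) :
    (∫ ω, (X ω - ∫ ω', X ω' ∂P) * (Y ω - ∫ ω', Y ω' ∂P) ∂P = 0) ∧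
      P {ω | 0 < X₁ ω - X₂ ω ∧ 0 < Y₁ ω - Y₂ ω} = 1 / 4 ∧
      (P {ω | X₁ ω < X₂ ω ∧ Y₁ ω < Y₂ ω}).toReal - 1 / 4 = 0 := by
  set ΔX : Ω → ℝ := fun ω => X₁ ω - X₂ ω
  set ΔY : Ω → ℝ := fun ω => Y₁ ω - Y₂ ω
  have hΔX : Measurable ΔX := hX₁.sub hX₂
  have hΔY : Measurable ΔY := hY₁.sub hY₂
  have h₁ : IdentDistrib (fun ω => (X₁ ω, Y₁ ω)) (fun ω => (X ω, Y ω)) P P :=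
    ⟨(hX₁.prodMk hY₁).aemeasurable, (hX.prodMk hY).aemeasurable, hcopy₁⟩
  have h₂ : IdentDistrib (fun ω => (X₂ ω, Y₂ ω)) (fun ω => (X ω, Y ω)) P P :=
    ⟨(hX₂.prodMk hY₂).aemeasurable, (hX.prodMk hY).aemeasurable, hcopy₂⟩
  have hμ : IsSymmetricAboutZero (P.map ΔX) :=
    (hindep.comp measurable_fst measurable_fst).isSymmetricAboutZero_map_sub hX₁ hX₂
      ((h₁.comp measurable_fst).trans (h₂.comp measurable_fst).symm).map_eq
  have : IsProbabilityMeasure (P.map ΔX) := Measure.isProbabilityMeasure_map hΔX.aemeasurable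
  have hμ0 : P.map ΔX {0} = 0 := by
    rwa [Measure.map_apply hΔX (measurableSet_singleton 0)]
  have hquarter : (2⁻¹ : ℝ≥0∞) * 2⁻¹ = 1 / 4 := by
    rw [← ENNReal.mul_inv (by simp) (by simp)]
    norm_num
  have hpos : P (ΔX ⁻¹' Ioi 0 ∩ ΔY ⁻¹' Ioi 0) = 1 / 4 := by
    rw [measure_preimage_inter_eq_mul_of_condDistrib hΔX hΔY measurableSet_Ioi measurableSet_Ioi
        (hcond.mono fun x hx => hx.1.measure_Ioi_eq_half hx.2),
      ← Measure.map_apply hΔX measurableSet_Ioi, hμ.measure_Ioi_eq_half hμ0, hquarter]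
  have hneg : P (ΔX ⁻¹' Iio 0 ∩ ΔY ⁻¹' Iio 0) = 1 / 4 := by
    rw [measure_preimage_inter_eq_mul_of_condDistrib hΔX hΔY measurableSet_Iio measurableSet_Iio
        (hcond.mono fun x hx => hx.1.measure_Iio_eq_half hx.2),
      ← Measure.map_apply hΔX measurableSet_Iio, hμ.measure_Iio_eq_half hμ0, hquarter]
  have hcov : 2 * cov[X, Y; P] = 0 := by
    rw [← covariance_sub_sub_eq_two_mul_of_indep_copies hXL2 hYL2 h₁ h₂ hindep]
    exact covariance_eq_zero_of_condDistrib_symm hΔX hΔY (hcond.mono fun x hx => hx.1)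
  refine ⟨(mul_eq_zero.mp hcov).resolve_left two_ne_zero, hpos, ?_⟩
  have hset : {ω | X₁ ω < X₂ ω ∧ Y₁ ω < Y₂ ω} = ΔX ⁻¹' Iio 0 ∩ ΔY ⁻¹' Iio 0 := by
    ext ω
    simp [ΔX, ΔY, sub_neg]
  rw [hset, hneg, ENNReal.toReal_div]
  norm_num
end

section
/- Let (X_i, Y_i), i = 1,…,n, be i.i.d. random elements with X_i = (X_{i1},…,X_{ip}) ∈ ℝ^p and Y_i ∈ ℝ, and for each j = 1,…,p let ω_j = (1/(n(n−1))) Σ_{i≠l} I(X_{ij}<X_{lj}) I(Y_i<Y_l) − 1/4. Then for any κ ∈ (0, 1/2) and any c₃ > 0 there exist a constant c₄ > 0 and an integer N ≥ 2, both depending only on c₃ and κ, such that for all n ≥ N and all p ≥ 1: P( max_{1≤j≤p} |ω_j − E(ω_j)| ≥ c₃ n^{−κ} ) ≤ p·exp(−c₄ n^{1−2κ}). -/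
/-!
Each `ω_j` is a U-statistic of order two whose kernel `I(x_j < x'_j) I(y < y') - 1/4` takes
values in an interval of length one. Hoeffding's representation writes such a U-statistic as the
average, over all permutations `σ` of the sample, of the means of the kernel over the `⌊n/2⌋`
disjoint pairs `(σ(2k), σ(2k+1))`. Each of these means involves independent terms, so by
Hoeffding's lemma it is sub-Gaussian with variance proxy `1 / (4⌊n/2⌋)`; by convexity of `exp` so
is their average, whence `P(|ω_j - E ω_j| ≥ t) ≤ 2 exp(-2⌊n/2⌋ t²)`. A union bound over `j` gives
the claim, the factor `2` being absorbed into `exp(-c₄ n^{1-2κ})` once `n` is large.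
-/

open MeasureTheory ProbabilityTheory Finset Real Filter
open scoped BigOperators NNReal

namespace Equiv.Perm

theorem exists_apply_eq_of_ne {α : Type*} [Finite α] {a b a' b' : α} (hab : a ≠ b)
    (hab' : a' ≠ b') : ∃ τ : Perm α, τ a = a' ∧ τ b = b' := by
  have inj : ∀ {x y : α}, x ≠ y → Function.Injective fun t : Bool => cond t x y := by
    intro x y hxy s t
    cases s <;> cases t <;> simp [hxy, hxy.symm]
  obtain ⟨τ, hτ⟩ := exists_extending_pair _ _ (inj hab) (inj hab')
  exact ⟨τ, hτ true, hτ false⟩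

variable {α M : Type*} [Fintype α] [AddCommMonoid M] [Module ℚ≥0 M]

theorem expect_apply_pair_eq [DecidableEq α] (f : α × α → M) {a b a' b' : α} (hab : a ≠ b)
    (hab' : a' ≠ b') : 𝔼 σ : Perm α, f (σ a, σ b) = 𝔼 σ : Perm α, f (σ a', σ b') := by
  obtain ⟨τ, hτa, hτb⟩ := exists_apply_eq_of_ne hab' hab
  exact Fintype.expect_equiv (Equiv.mulRight τ) _ _ fun σ => by simp [hτa, hτb]

theorem expect_offDiag_apply (f : α × α → M) (σ : Perm α) :
    𝔼 q ∈ univ.offDiag, f (σ q.1, σ q.2) = 𝔼 q ∈ univ.offDiag, f q :=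
  expect_equiv (σ.prodCongr σ) (by simp) (by simp)

theorem expect_apply_pair [DecidableEq α] (f : α × α → M) {a b : α} (hab : a ≠ b) :
    𝔼 σ : Perm α, f (σ a, σ b) = 𝔼 q ∈ univ.offDiag, f q := calc
  _ = 𝔼 q ∈ univ.offDiag, 𝔼 σ : Perm α, f (σ q.1, σ q.2) := by
    rw [expect_congr rfl fun q hq => expect_apply_pair_eq f (mem_offDiag.1 hq).2.2 hab,
      expect_const ⟨(a, b), by simpa using hab⟩]
  _ = 𝔼 σ : Perm α, 𝔼 q ∈ univ.offDiag, f q := by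
    rw [expect_comm]
    exact expect_congr rfl fun σ _ => expect_offDiag_apply f σ
  _ = _ := expect_const univ_nonempty _

end Equiv.Perm

lemma Fin.exists_disjoint_pairs (n : ℕ) : ∃ i j : Fin (n / 2) → Fin n, (∀ k, i k ≠ j k) ∧
    Pairwise fun k k' => Disjoint ({i k, j k} : Set (Fin n)) {i k', j k'} := by
  refine ⟨fun k => ⟨2 * k, by omega⟩, fun k => ⟨2 * k + 1, by omega⟩, fun k => by simp, ?_⟩
  intro k k' hkk'
  have : (k : ℕ) ≠ k' := Fin.val_ne_of_ne hkk'
  simp only [Set.disjoint_left, Set.mem_insert_iff, Fin.ext_iff, Set.mem_singleton_iff, not_or]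
  omega

namespace ProbabilityTheory

variable {Ω ι κ E : Type*} {mΩ : MeasurableSpace Ω} {P : Measure Ω} [mE : MeasurableSpace E]

lemma integrable_expect {f : ι → Ω → ℝ} {s : Finset ι} (hf : ∀ i ∈ s, Integrable (f i) P) :
    Integrable (fun ω => 𝔼 i ∈ s, f i ω) P := by
  simp only [expect_eq_sum_div_card]
  exact (integrable_finsetSum _ hf).div_const _

lemma integral_expect {f : ι → Ω → ℝ} {s : Finset ι} (hf : ∀ i ∈ s, Integrable (f i) P) :
    ∫ ω, 𝔼 i ∈ s, f i ω ∂P = 𝔼 i ∈ s, ∫ ω, f i ω ∂P := by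
  simp only [expect_eq_sum_div_card]
  rw [integral_div, integral_finsetSum _ hf]

lemma measureReal_le_sup'_le_sum [IsFiniteMeasure P] {s : Finset ι} (hs : s.Nonempty)
    (X : ι → Ω → ℝ) (t : ℝ) :
    P.real {ω | t ≤ s.sup' hs fun i => X i ω} ≤ ∑ i ∈ s, P.real {ω | t ≤ X i ω} := calc
  _ ≤ P.real (⋃ i ∈ s, {ω | t ≤ X i ω}) :=
      measureReal_mono (fun ω hω => by simpa using (le_sup'_iff hs).1 hω) (measure_ne_top P _)
  _ ≤ _ := measureReal_biUnion_finset_le s _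

lemma measurable_iSup_comap {Z : ι → Ω → E} {S : Set ι} {i : ι} (hi : i ∈ S) :
    Measurable[⨆ i ∈ S, mE.comap (Z i)] (Z i) :=
  (comap_measurable (Z i)).mono (le_iSup₂ (f := fun i (_ : i ∈ S) => mE.comap (Z i)) i hi) le_rfl

namespace HasSubgaussianMGF

/-- Jensen's inequality for `exp`: no independence is needed. -/
lemma sum_mul_of_sum_eq_one {X : ι → Ω → ℝ} {c : ℝ≥0} {s : Finset ι} {w : ι → ℝ}
    (hw₀ : ∀ i ∈ s, 0 ≤ w i) (hw₁ : ∑ i ∈ s, w i = 1)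
    (h : ∀ i ∈ s, HasSubgaussianMGF (X i) c P) :
    HasSubgaussianMGF (fun ω => ∑ i ∈ s, w i * X i ω) c P := by
  have jensen : ∀ t ω, exp (t * ∑ i ∈ s, w i * X i ω) ≤ ∑ i ∈ s, w i * exp (t * X i ω) := by
    intro t ω
    have := convexOn_exp.map_sum_le hw₀ hw₁ (p := fun i => t * X i ω) (by simp)
    simpa [Finset.mul_sum, mul_left_comm t] using this
  have hint : ∀ t, Integrable (fun ω => ∑ i ∈ s, w i * exp (t * X i ω)) P := fun t =>
    integrable_finsetSum _ fun i hi => ((h i hi).integrable_exp_mul t).const_mul _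
  have hint_exp : ∀ t, Integrable (fun ω => exp (t * ∑ i ∈ s, w i * X i ω)) P := by
    refine fun t => (hint t).mono' ?_ (ae_of_all _ fun ω => ?_)
    · refine continuous_exp.comp_aestronglyMeasurable (AEStronglyMeasurable.const_mul ?_ t)
      exact s.aestronglyMeasurable_fun_sum fun i hi => (h i hi).aestronglyMeasurable.const_mul _
    · simpa [abs_of_pos (exp_pos _)] using jensen t ω
  refine ⟨hint_exp, fun t => ?_⟩
  calc mgf (fun ω => ∑ i ∈ s, w i * X i ω) P t
      ≤ ∫ ω, ∑ i ∈ s, w i * exp (t * X i ω) ∂P := integral_mono (hint_exp t) (hint t) (jensen t)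
    _ = ∑ i ∈ s, w i * mgf (X i) P t := by
        rw [integral_finsetSum _ fun i hi => ((h i hi).integrable_exp_mul t).const_mul _]
        simp only [integral_const_mul, mgf]
    _ ≤ ∑ i ∈ s, w i * exp (c * t ^ 2 / 2) :=
        sum_le_sum fun i hi => mul_le_mul_of_nonneg_left ((h i hi).mgf_le t) (hw₀ i hi)
    _ = exp (c * t ^ 2 / 2) := by rw [← sum_mul, hw₁, one_mul]

lemma expect {X : ι → Ω → ℝ} {c : ℝ≥0} {s : Finset ι} (hs : s.Nonempty)
    (h : ∀ i ∈ s, HasSubgaussianMGF (X i) c P) :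
    HasSubgaussianMGF (fun ω => 𝔼 i ∈ s, X i ω) c P := by
  have hw : ∑ _i ∈ s, ((#s : ℝ))⁻¹ = 1 := by
    rw [sum_const, nsmul_eq_mul, mul_inv_cancel₀ (by simpa using hs.ne_empty)]
  simpa only [expect_eq_sum_div_card, div_eq_inv_mul, mul_sum]
    using sum_mul_of_sum_eq_one (fun _ _ => by positivity) hw h

lemma measureReal_abs_ge_le [IsFiniteMeasure P] {X : Ω → ℝ} {c : ℝ≥0}
    (h : HasSubgaussianMGF X c P) {ε : ℝ} (hε : 0 ≤ ε) :
    P.real {ω | ε ≤ |X ω|} ≤ 2 * exp (-ε ^ 2 / (2 * c)) := by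
  have hneg : P.real {ω | ε ≤ -X ω} ≤ exp (-ε ^ 2 / (2 * c)) := h.neg.measure_ge_le hε
  calc P.real {ω | ε ≤ |X ω|} ≤ P.real ({ω | ε ≤ X ω} ∪ {ω | ε ≤ -X ω}) :=
        measureReal_mono (fun ω (hω : ε ≤ |X ω|) => le_abs.1 hω) (measure_ne_top P _)
    _ ≤ _ := (measureReal_union_le _ _).trans <| by linarith [h.measure_ge_le hε]

end HasSubgaussianMGF

namespace iIndepFun

lemma indepFun_of_measurable_iSup {Z : ι → Ω → E} (hZ : ∀ i, Measurable (Z i))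
    (hindep : iIndepFun Z P) {S T : Set ι} (hST : Disjoint S T) {f g : Ω → ℝ}
    (hf : Measurable[⨆ i ∈ S, mE.comap (Z i)] f) (hg : Measurable[⨆ i ∈ T, mE.comap (Z i)] g) :
    IndepFun f g P := by
  rw [IndepFun_iff_Indep]
  exact indep_of_indep_of_le_right (indep_of_indep_of_le_left
    (indep_iSup_of_disjoint (fun i => (hZ i).comap_le) hindep.iIndep hST) hf.comap_le) hg.comap_le

lemma hasSubgaussianMGF_sum_pairs {Z : ι → Ω → E} (hZ : ∀ i, Measurable (Z i))
    (hindep : iIndepFun Z P) {a b : κ → ι}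
    (hab : Pairwise fun k k' => Disjoint ({a k, b k} : Set ι) {a k', b k'})
    {G : κ → E × E → ℝ} (hG : ∀ k, Measurable (G k)) {c : κ → ℝ≥0} (s : Finset κ)
    (h : ∀ k ∈ s, HasSubgaussianMGF (fun ω => G k (Z (a k) ω, Z (b k) ω)) (c k) P) :
    HasSubgaussianMGF (fun ω => ∑ k ∈ s, G k (Z (a k) ω, Z (b k) ω)) (∑ k ∈ s, c k) P := by
  classical
  induction s using Finset.induction_on with
  | empty =>
    have := hindep.isProbabilityMeasure
    simp
  | insert k s hk ih =>
    simp only [sum_insert hk]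
    refine (h k (mem_insert_self k s)).add_of_indepFun
      (ih fun k' hk' => h k' (mem_insert_of_mem hk')) ?_
    refine hindep.indepFun_of_measurable_iSup hZ (S := {a k, b k})
      (T := ⋃ k' ∈ s, {a k', b k'}) ?_ ?_ ?_
    · exact Set.disjoint_iUnion₂_right.2 fun k' hk' => hab fun hkk' => hk (hkk' ▸ hk')
    · exact (hG k).comp ((measurable_iSup_comap (by simp)).prodMk (measurable_iSup_comap (by simp)))
    · refine Finset.measurable_sum _ fun k' hk' => (hG k').comp ?_
      exact (measurable_iSup_comap (Set.mem_biUnion hk' (by simp))).prodMk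
        (measurable_iSup_comap (Set.mem_biUnion hk' (by simp)))

lemma hasSubgaussianMGF_expect_pairs [IsProbabilityMeasure P] [Fintype κ] [Nonempty κ]
    {Z : ι → Ω → E} (hZ : ∀ i, Measurable (Z i)) (hindep : iIndepFun Z P) {i j : κ → ι}
    (hij : Pairwise fun k k' => Disjoint ({i k, j k} : Set ι) {i k', j k'})
    {F : E × E → ℝ} (hF : Measurable F) {a b : ℝ} (hFab : ∀ x, F x ∈ Set.Icc a b) :
    HasSubgaussianMGF (fun ω => 𝔼 k, F (Z (i k) ω, Z (j k) ω)
        - ∫ ω', 𝔼 k, F (Z (i k) ω', Z (j k) ω') ∂P)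
      ((‖b - a‖₊ / 2) ^ 2 / Fintype.card κ) P := by
  set G : κ → Ω → ℝ := fun k ω => F (Z (i k) ω, Z (j k) ω)
  have hG : ∀ k, Measurable (G k) := fun k => hF.comp ((hZ (i k)).prodMk (hZ (j k)))
  have hGab : ∀ k, ∀ᵐ ω ∂P, G k ω ∈ Set.Icc a b := fun k => ae_of_all _ fun ω => hFab _
  have hsum := hindep.hasSubgaussianMGF_sum_pairs hZ hij
    (G := fun k x => F x - ∫ ω, G k ω ∂P) (fun k => hF.sub_const _) univ
    fun k _ => hasSubgaussianMGF_of_mem_Icc (hG k).aemeasurable (hGab k)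
  have hm : (Fintype.card κ : ℝ) ≠ 0 := by positivity
  convert (hsum.const_mul (Fintype.card κ : ℝ)⁻¹).congr (ae_of_all _ fun ω => ?_) using 1
  · -- `const_mul` writes its factor `r ^ 2` as a bare subtype element, out of reach of `simp`
    refine NNReal.eq ?_
    change _ = (Fintype.card κ : ℝ)⁻¹ ^ 2 * ((∑ _k : κ, (‖b - a‖₊ / 2) ^ 2 : ℝ≥0) : ℝ)
    simp only [NNReal.coe_div, NNReal.coe_pow, coe_nnnorm, norm_eq_abs, NNReal.coe_ofNat,
      NNReal.coe_natCast, inv_pow, sum_const, card_univ, nsmul_eq_mul, NNReal.coe_mul]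
    field_simp
  · simp only
    rw [integral_expect fun k _ => Integrable.of_mem_Icc a b (hG k).aemeasurable (hGab k),
      ← expect_sub_distrib, expect_eq_sum_div_card, card_univ, div_eq_inv_mul]

/-- **Hoeffding's inequality for U-statistics of order two.** -/
theorem hasSubgaussianMGF_uStatistic [IsProbabilityMeasure P] {n : ℕ} (hn : 2 ≤ n)
    {Z : Fin n → Ω → E} (hZ : ∀ i, Measurable (Z i)) (hindep : iIndepFun Z P)
    {F : E × E → ℝ} (hF : Measurable F) {a b : ℝ} (hFab : ∀ x, F x ∈ Set.Icc a b) :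
    HasSubgaussianMGF (fun ω => 𝔼 q ∈ univ.offDiag, F (Z q.1 ω, Z q.2 ω)
        - ∫ ω', 𝔼 q ∈ univ.offDiag, F (Z q.1 ω', Z q.2 ω') ∂P)
      ((‖b - a‖₊ / 2) ^ 2 / (n / 2 : ℕ)) P := by
  obtain ⟨i, j, hij, hdisj⟩ := Fin.exists_disjoint_pairs n
  have : Nonempty (Fin (n / 2)) := ⟨⟨0, by omega⟩⟩
  set V : Equiv.Perm (Fin n) → Ω → ℝ := fun σ ω => 𝔼 k, F (Z (σ (i k)) ω, Z (σ (j k)) ω)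
  have hV : ∀ ω, 𝔼 q ∈ univ.offDiag, F (Z q.1 ω, Z q.2 ω) = 𝔼 σ, V σ ω := fun ω => by
    simp only [V, expect_comm univ (univ : Finset (Fin (n / 2))),
      Equiv.Perm.expect_apply_pair (fun q => F (Z q.1 ω, Z q.2 ω)) (hij _), Fintype.expect_const]
  have hVint : ∀ σ, Integrable (V σ) P := fun σ => integrable_expect fun k _ =>
    Integrable.of_mem_Icc a b (hF.comp ((hZ _).prodMk (hZ _))).aemeasurable
      (ae_of_all _ fun ω => hFab _)
  have hsub := HasSubgaussianMGF.expect univ_nonempty fun (σ : Equiv.Perm (Fin n)) _ =>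
    (hindep.precomp σ.injective).hasSubgaussianMGF_expect_pairs (fun k => hZ _) hdisj hF hFab
  simp only [Fintype.card_fin] at hsub
  refine hsub.congr (ae_of_all _ fun ω => ?_)
  simp only [hV, integral_expect fun σ _ => hVint σ, expect_sub_distrib]
  rfl

end iIndepFun

end ProbabilityTheory

/-- The kernel whose U-statistic is `ω_j`. -/
noncomputable def kendallKernel {p : ℕ} (j : Fin p) (x : ((Fin p → ℝ) × ℝ) × ((Fin p → ℝ) × ℝ)) :
    ℝ :=
  (if x.1.1 j < x.2.1 j then 1 else 0) * (if x.1.2 < x.2.2 then 1 else 0) - 1 / 4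

lemma measurable_kendallKernel {p : ℕ} (j : Fin p) : Measurable (kendallKernel j) :=
  ((Measurable.ite (measurableSet_lt measurable_fst.fst.eval measurable_snd.fst.eval)
    measurable_const measurable_const).mul
  (Measurable.ite (measurableSet_lt measurable_fst.snd measurable_snd.snd)
    measurable_const measurable_const)).sub_const _

lemma kendallKernel_mem_Icc {p : ℕ} (j : Fin p) (x : ((Fin p → ℝ) × ℝ) × ((Fin p → ℝ) × ℝ)) :
    kendallKernel j x ∈ Set.Icc (-1 / 4) (3 / 4) := by
  unfold kendallKernel
  split_ifs <;> norm_num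

lemma Fin.one_div_mul_sum_filter_ne_sub_eq_expect {n : ℕ} (hn : 2 ≤ n) (f : Fin n × Fin n → ℝ)
    (c : ℝ) :
    1 / ((n : ℝ) * (n - 1)) * ∑ q ∈ univ.filter (fun q => q.1 ≠ q.2), f q - c
      = 𝔼 q ∈ univ.offDiag, (f q - c) := by
  have hfilter : univ.filter (fun q : Fin n × Fin n => q.1 ≠ q.2) = univ.offDiag := by ext; simp
  have hne : (univ : Finset (Fin n)).offDiag.Nonempty :=
    ⟨((⟨0, by omega⟩ : Fin n), (⟨1, by omega⟩ : Fin n)), by simp⟩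
  rw [expect_sub_distrib, expect_const hne, hfilter, expect_eq_sum_div_card, offDiag_card,
    card_univ, Fintype.card_fin, Nat.cast_sub (Nat.le_mul_self _)]
  push_cast
  ring

lemma two_mul_exp_neg_le {n : ℕ} (hn : 2 ≤ n) {κ c : ℝ} (hc : 0 < c)
    (h : 4 * log 2 / c ^ 2 ≤ (n : ℝ) ^ (1 - 2 * κ)) :
    2 * exp (-(c * (n : ℝ) ^ (-κ)) ^ 2 / (2 * (1 / (4 * (n / 2 : ℕ)))))
      ≤ exp (-(c ^ 2 / 4) * (n : ℝ) ^ (1 - 2 * κ)) := by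
  have hn0 : (0 : ℝ) < n := by positivity
  have hpow : ((n : ℝ) ^ (-κ)) ^ 2 * n = (n : ℝ) ^ (1 - 2 * κ) := by
    rw [← rpow_natCast, ← rpow_mul hn0.le, ← rpow_add_one hn0.ne']
    congr 1
    push_cast
    ring
  have hm : (n : ℝ) ≤ 4 * (n / 2 : ℕ) := by exact_mod_cast (by omega : n ≤ 4 * (n / 2))
  have hlog : 4 * log 2 ≤ c ^ 2 * (n : ℝ) ^ (1 - 2 * κ) := by
    rwa [div_le_iff₀' (by positivity)] at h
  have hR : (n : ℝ) ^ (1 - 2 * κ) ≤ 4 * (((n : ℝ) ^ (-κ)) ^ 2 * (n / 2 : ℕ)) := by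
    rw [← hpow]
    nlinarith [mul_le_mul_of_nonneg_left hm (sq_nonneg ((n : ℝ) ^ (-κ)))]
  have hexp : (c * (n : ℝ) ^ (-κ)) ^ 2 / (2 * (1 / (4 * (n / 2 : ℕ))))
      = 2 * c ^ 2 * (((n : ℝ) ^ (-κ)) ^ 2 * (n / 2 : ℕ)) := by
    field_simp
    ring
  rw [neg_div, hexp, show ∀ x : ℝ, 2 * exp x = exp (log 2 + x) from fun x => by
    rw [exp_add, exp_log two_pos], exp_le_exp]
  nlinarith [mul_le_mul_of_nonneg_left hR (sq_nonneg c)]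

/-- **Uniform concentration for the marginal Kendall rank statistics:** for any
`κ ∈ (0,1/2)` and `c₃ > 0` there are `c₄ > 0` and `N ≥ 2` such that for all `n ≥ N`, all
`p ≥ 1` and all i.i.d. samples `(X_i, Y_i) ∈ ℝ^p × ℝ`, `i = 1,…,n`,
`P(max_{1≤j≤p} |ω_j - E ω_j| ≥ c₃ n^{-κ}) ≤ p exp(-c₄ n^{1-2κ})`. -/
theorem max_kendall_statistic_concentration :
    ∀ κ ∈ Set.Ioo (0 : ℝ) (1 / 2), ∀ c₃ > (0 : ℝ),
      ∃ c₄ > (0 : ℝ), ∃ N : ℕ, 2 ≤ N ∧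
        ∀ n : ℕ, N ≤ n → ∀ p : ℕ, ∀ hp : 1 ≤ p,
          ∀ (Ω : Type) (_ : MeasurableSpace Ω) (P : Measure Ω),
            IsProbabilityMeasure P →
          ∀ (X : Fin n → Ω → (Fin p → ℝ)) (Y : Fin n → Ω → ℝ),
            (∀ i, Measurable (X i)) → (∀ i, Measurable (Y i)) →
            iIndepFun (fun i ω => (X i ω, Y i ω)) P →
            (∀ i l, P.map (fun ω => (X i ω, Y i ω)) = P.map (fun ω => (X l ω, Y l ω))) →
          ∀ W : Fin p → Ω → ℝ,
            (∀ j a, W j a = (1 / ((n : ℝ) * ((n : ℝ) - 1))) *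
                ∑ q ∈ (Finset.univ : Finset (Fin n × Fin n)).filter (fun q => q.1 ≠ q.2),
                  (if X q.1 a j < X q.2 a j then (1 : ℝ) else 0) *
                    (if Y q.1 a < Y q.2 a then (1 : ℝ) else 0)
              - 1 / 4) →
          (P {a | c₃ * (n : ℝ) ^ (-κ) ≤
              (Finset.univ : Finset (Fin p)).sup' ⟨⟨0, hp⟩, Finset.mem_univ _⟩
                (fun j => |W j a - ∫ a', W j a' ∂P|)}).toReal
            ≤ (p : ℝ) * Real.exp (-c₄ * (n : ℝ) ^ (1 - 2 * κ)) := by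
  rintro κ ⟨hκ0, hκ2⟩ c₃ hc₃
  obtain ⟨N, hN⟩ := eventually_atTop.1 <| ((tendsto_rpow_atTop (by linarith : 0 < 1 - 2 * κ)).comp
    tendsto_natCast_atTop_atTop).eventually_ge_atTop (4 * log 2 / c₃ ^ 2)
  refine ⟨c₃ ^ 2 / 4, by positivity, max N 2, le_max_right _ _, ?_⟩
  intro n hn p hp Ω _ P _ X Y hX hY hindep _ W hW
  have hn2 : 2 ≤ n := le_of_max_le_right hn
  obtain rfl : W = fun j ω =>
      𝔼 q ∈ univ.offDiag, kendallKernel j ((X q.1 ω, Y q.1 ω), (X q.2 ω, Y q.2 ω)) :=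
    funext₂ fun j ω => (hW j ω).trans (Fin.one_div_mul_sum_filter_ne_sub_eq_expect hn2 _ _)
  have hsub := fun j => hindep.hasSubgaussianMGF_uStatistic hn2
    (fun i => (hX i).prodMk (hY i)) (measurable_kendallKernel j) (kendallKernel_mem_Icc j)
  have hc : (((‖(3 / 4 : ℝ) - -1 / 4‖₊ / 2) ^ 2 / (n / 2 : ℕ) : ℝ≥0) : ℝ)
      = 1 / (4 * (n / 2 : ℕ)) := by
    push_cast
    norm_num
    ring
  rw [← measureReal_def]
  calc _ ≤ _ := measureReal_le_sup'_le_sum _ _ _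
    _ ≤ ∑ _j : Fin p, 2 * exp (-(c₃ * (n : ℝ) ^ (-κ)) ^ 2 / (2 * (1 / (4 * (n / 2 : ℕ))))) :=
        sum_le_sum fun j _ => hc ▸ (hsub j).measureReal_abs_ge_le (by positivity)
    _ ≤ _ := by
        rw [sum_const, card_univ, Fintype.card_fin, nsmul_eq_mul]
        exact mul_le_mul_of_nonneg_left (two_mul_exp_neg_le hn2 hc₃
          (hN n (le_of_max_le_left hn))) (Nat.cast_nonneg _)
end

section
/- Let X = (X₁,…,X_p) be a square-integrable random vector in ℝ^p with covariance matrix Σ, let β ∈ ℝ^p, and let ε be a real random variable with mean zero and finite variance that is independent of X. Set Y = βᵀX + ε. Then for every γ > 0, the number of indices k ∈ {1,…,p} with |Cov(X_k, Y)| ≥ γ is at most λ_max(Σ)·Var(Y)/γ², where λ_max(Σ) denotes the largest eigenvalue of Σ. -/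
/-!
Since `ε` is independent of `X`, `Cov(X_k, Y) = (Σβ)_k` and `Var Y = βᵀΣβ + Var ε ≥ βᵀΣβ`.
In an orthonormal eigenbasis `(u_i)` of `Σ` with eigenvalues `0 ≤ λ_i ≤ λ_max`,
`‖Σβ‖² = ∑ λ_i² ⟨u_i, β⟩² ≤ λ_max ∑ λ_i ⟨u_i, β⟩² = λ_max βᵀΣβ`,
and at most `‖Σβ‖² / γ²` coordinates of `Σβ` can have absolute value `≥ γ`.
-/

open MeasureTheory ProbabilityTheory Finset

noncomputable def cov {Ω : Type*} [MeasurableSpace Ω] (P : Measure Ω) (f g : Ω → ℝ) : ℝ :=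
  ∫ ω, (f ω - ∫ ω', f ω' ∂P) * (g ω - ∫ ω', g ω' ∂P) ∂P

open Matrix

namespace Matrix

variable {n : Type*} [Fintype n]

lemma dotProduct_eq_sum_mul_of_orthonormalBasis (b : OrthonormalBasis n ℝ (EuclideanSpace ℝ n))
    (u w : n → ℝ) : u ⬝ᵥ w = ∑ i, (⇑(b i) ⬝ᵥ u) * (⇑(b i) ⬝ᵥ w) := by
  have := b.sum_inner_mul_inner (WithLp.toLp 2 u) (WithLp.toLp 2 w)
  simp only [EuclideanSpace.inner_eq_star_dotProduct, star_trivial] at this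
  rw [dotProduct_comm, ← this]
  exact Finset.sum_congr rfl fun i _ ↦ by rw [dotProduct_comm w]

variable [DecidableEq n] {A : Matrix n n ℝ}

namespace IsHermitian

lemma eigenvectorBasis_dotProduct_mulVec (hA : A.IsHermitian) (i : n) (v : n → ℝ) :
    ⇑(hA.eigenvectorBasis i) ⬝ᵥ A *ᵥ v = hA.eigenvalues i * (⇑(hA.eigenvectorBasis i) ⬝ᵥ v) := by
  have hAt : Aᵀ = A := (conjTranspose_eq_transpose_of_trivial A).symm.trans hA
  rw [dotProduct_mulVec, ← mulVec_transpose, hAt, hA.mulVec_eigenvectorBasis,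
    smul_dotProduct, smul_eq_mul]

lemma dotProduct_mulVec_eq_sum_eigenvalues (hA : A.IsHermitian) (u v : n → ℝ) :
    u ⬝ᵥ A *ᵥ v = ∑ i, hA.eigenvalues i *
      ((⇑(hA.eigenvectorBasis i) ⬝ᵥ u) * (⇑(hA.eigenvectorBasis i) ⬝ᵥ v)) := by
  rw [dotProduct_eq_sum_mul_of_orthonormalBasis hA.eigenvectorBasis]
  simp only [hA.eigenvectorBasis_dotProduct_mulVec]
  exact Finset.sum_congr rfl fun i _ ↦ by ring

end IsHermitian

lemma PosSemidef.mulVec_dotProduct_mulVec_le (hA : A.PosSemidef) {c : ℝ}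
    (hc : ∀ i, hA.1.eigenvalues i ≤ c) (v : n → ℝ) :
    A *ᵥ v ⬝ᵥ A *ᵥ v ≤ c * (v ⬝ᵥ A *ᵥ v) := by
  rw [hA.1.dotProduct_mulVec_eq_sum_eigenvalues,
    hA.1.dotProduct_mulVec_eq_sum_eigenvalues, Finset.mul_sum]
  refine Finset.sum_le_sum fun i _ ↦ ?_
  rw [hA.1.eigenvectorBasis_dotProduct_mulVec]
  have hx := mul_self_nonneg (⇑(hA.1.eigenvectorBasis i) ⬝ᵥ v)
  linear_combination mul_le_mul_of_nonneg_right (hc i) (mul_nonneg (hA.eigenvalues_nonneg i) hx)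

end Matrix

lemma Finset.card_filter_le_abs_mul_sq_le_sum_sq {ι : Type*} (s : Finset ι) (f : ι → ℝ) {γ : ℝ}
    (hγ : 0 ≤ γ) : (#(s.filter fun k ↦ γ ≤ |f k|) : ℝ) * γ ^ 2 ≤ ∑ k ∈ s, f k ^ 2 := by
  rw [← nsmul_eq_mul]
  calc #(s.filter fun k ↦ γ ≤ |f k|) • γ ^ 2
      ≤ ∑ k ∈ s.filter fun k ↦ γ ≤ |f k|, f k ^ 2 :=
        card_nsmul_le_sum _ _ _ fun k hk ↦ by
          simpa only [sq_abs] using pow_le_pow_left₀ hγ (mem_filter.mp hk).2 2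
    _ ≤ ∑ k ∈ s, f k ^ 2 :=
        sum_le_sum_of_subset_of_nonneg (filter_subset _ _) fun k _ _ ↦ sq_nonneg (f k)

namespace ProbabilityTheory

variable {Ω ι : Type*} {mΩ : MeasurableSpace Ω} {μ : Measure Ω} [Fintype ι] {X : Ω → ι → ℝ}

noncomputable def covarianceMatrix (X : Ω → ι → ℝ) (μ : Measure Ω) : Matrix ι ι ℝ :=
  Matrix.of fun i j ↦ cov[fun ω ↦ X ω i, fun ω ↦ X ω j; μ]

lemma memLp_fun_sum_mul (hX : ∀ i, MemLp (fun ω ↦ X ω i) 2 μ) (v : ι → ℝ) :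
    MemLp (fun ω ↦ ∑ i, v i * X ω i) 2 μ :=
  memLp_finsetSum _ fun i _ ↦ (hX i).const_mul (v i)

variable [IsFiniteMeasure μ]

lemma covariance_fun_sum_mul_right (hX : ∀ i, MemLp (fun ω ↦ X ω i) 2 μ) (v : ι → ℝ) (k : ι) :
    cov[fun ω ↦ X ω k, fun ω ↦ ∑ i, v i * X ω i; μ] = (covarianceMatrix X μ *ᵥ v) k := by
  rw [covariance_fun_sum_right (fun i ↦ (hX i).const_mul (v i)) (hX k)]
  simp only [covariance_const_mul_right, mulVec, dotProduct, covarianceMatrix, of_apply]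
  exact sum_congr rfl fun i _ ↦ mul_comm _ _

lemma variance_fun_sum_mul (hX : ∀ i, MemLp (fun ω ↦ X ω i) 2 μ) (v : ι → ℝ) :
    Var[fun ω ↦ ∑ i, v i * X ω i; μ] = v ⬝ᵥ covarianceMatrix X μ *ᵥ v := by
  rw [← covariance_self (memLp_fun_sum_mul hX v).aemeasurable,
    covariance_fun_sum_left (fun i ↦ (hX i).const_mul (v i)) (memLp_fun_sum_mul hX v)]
  refine sum_congr rfl fun i _ ↦ ?_
  rw [covariance_const_mul_left, covariance_fun_sum_mul_right hX]

lemma posSemidef_covarianceMatrix (hX : ∀ i, MemLp (fun ω ↦ X ω i) 2 μ) :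
    (covarianceMatrix X μ).PosSemidef := by
  refine posSemidef_iff_dotProduct_mulVec.mpr ⟨?_, fun v ↦ ?_⟩
  · ext i j
    exact covariance_comm _ _
  · rw [star_trivial, ← variance_fun_sum_mul hX]
    exact variance_nonneg _ _

section LinearModel

variable {β : ι → ℝ} {ε Y : Ω → ℝ}

lemma covariance_eq_covarianceMatrix_mulVec_of_linearModel (hX : ∀ i, MemLp (fun ω ↦ X ω i) 2 μ)
    (hε : MemLp ε 2 μ) (hind : IndepFun ε X μ) (hY : ∀ ω, Y ω = ∑ i, β i * X ω i + ε ω) (k : ι) :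
    cov[fun ω ↦ X ω k, Y; μ] = (covarianceMatrix X μ *ᵥ β) k := by
  have hεk : cov[fun ω ↦ X ω k, ε; μ] = 0 :=
    (hind.symm.comp (measurable_pi_apply k) measurable_id).covariance_eq_zero (hX k) hε
  rw [show Y = (fun ω ↦ ∑ i, β i * X ω i) + ε from funext hY,
    covariance_add_right (hX k) (memLp_fun_sum_mul hX β) hε, covariance_fun_sum_mul_right hX,
    hεk, add_zero]

lemma dotProduct_covarianceMatrix_mulVec_le_variance_of_linearModel
    (hX : ∀ i, MemLp (fun ω ↦ X ω i) 2 μ) (hε : MemLp ε 2 μ) (hind : IndepFun ε X μ)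
    (hY : ∀ ω, Y ω = ∑ i, β i * X ω i + ε ω) :
    β ⬝ᵥ covarianceMatrix X μ *ᵥ β ≤ Var[Y; μ] := by
  have hindS : IndepFun (fun ω ↦ ∑ i, β i * X ω i) ε μ :=
    (hind.comp measurable_id (by fun_prop : Measurable fun x : ι → ℝ ↦ ∑ i, β i * x i)).symm
  rw [show Y = (fun ω ↦ ∑ i, β i * X ω i) + ε from funext hY,
    hindS.variance_add (memLp_fun_sum_mul hX β) hε, variance_fun_sum_mul hX]
  exact le_add_of_nonneg_right (variance_nonneg ε μ)

end LinearModel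

end ProbabilityTheory

theorem card_marginally_correlated_le_general
    {Ω : Type*} [MeasurableSpace Ω] (P : Measure Ω) [IsProbabilityMeasure P]
    (p : ℕ) (hp : 1 ≤ p)
    (X : Ω → (Fin p → ℝ))
    (hXL2 : ∀ k, MemLp (fun ω => X ω k) 2 P)
    (β : Fin p → ℝ)
    (ε : Ω → ℝ) (hεL2 : MemLp ε 2 P)
    (hεindep : IndepFun ε X P)
    (Y : Ω → ℝ) (hYdef : ∀ ω, Y ω = (∑ k, β k * X ω k) + ε ω)
    (Sigm : Matrix (Fin p) (Fin p) ℝ)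
    (hSigdef : ∀ k l, Sigm k l = cov P (fun ω => X ω k) (fun ω => X ω l))
    (hHerm : Sigm.IsHermitian) :
    ∀ γ > (0 : ℝ),
      (((Finset.univ : Finset (Fin p)).filter
            (fun k => γ ≤ |cov P (fun ω => X ω k) Y|)).card : ℝ)
        ≤ ((Finset.univ : Finset (Fin p)).sup' ⟨⟨0, hp⟩, Finset.mem_univ _⟩
              hHerm.eigenvalues) * variance Y P / γ ^ 2 := by
  intro γ hγ
  -- `cov P f g` is definitionally Mathlib's `cov[f, g; P]`.
  have hSig : Sigm = covarianceMatrix X P := Matrix.ext hSigdef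
  have hPSD : Sigm.PosSemidef := hSig ▸ posSemidef_covarianceMatrix hXL2
  set lmax := (Finset.univ : Finset (Fin p)).sup' ⟨⟨0, hp⟩, Finset.mem_univ _⟩ hHerm.eigenvalues
  have hle : ∀ i, hHerm.eigenvalues i ≤ lmax := fun i ↦ le_sup' _ (mem_univ i)
  have hcov : ∀ k, cov P (fun ω ↦ X ω k) Y = (Sigm *ᵥ β) k := by
    rw [hSig]
    exact covariance_eq_covarianceMatrix_mulVec_of_linearModel hXL2 hεL2 hεindep hYdef
  have hvar : β ⬝ᵥ Sigm *ᵥ β ≤ variance Y P := by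
    rw [hSig]
    exact dotProduct_covarianceMatrix_mulVec_le_variance_of_linearModel hXL2 hεL2 hεindep hYdef
  rw [le_div_iff₀ (by positivity)]
  calc _ ≤ ∑ k, cov P (fun ω ↦ X ω k) Y ^ 2 := card_filter_le_abs_mul_sq_le_sum_sq _ _ hγ.le
    _ = Sigm *ᵥ β ⬝ᵥ Sigm *ᵥ β := by simp only [hcov, sq, dotProduct]
    _ ≤ lmax * (β ⬝ᵥ Sigm *ᵥ β) := hPSD.mulVec_dotProduct_mulVec_le hle β
    _ ≤ lmax * variance Y P :=
      mul_le_mul_of_nonneg_left hvar ((hPSD.eigenvalues_nonneg _).trans (hle ⟨0, hp⟩))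

/-- **Bound on the number of marginally correlated predictors in a linear model:** if
`Y = βᵀX + ε` with `ε` independent of `X` and mean zero, then for every `γ > 0` the number
of indices `k` with `|Cov(X_k, Y)| ≥ γ` is at most `λ_max(Σ) Var(Y) / γ²`, where
`Σ = Cov(X)` and `λ_max(Σ)` is its largest eigenvalue. -/
theorem card_marginally_correlated_le
    {Ω : Type*} [MeasurableSpace Ω] (P : Measure Ω) [IsProbabilityMeasure P]
    (p : ℕ) (hp : 1 ≤ p)
    (X : Ω → (Fin p → ℝ)) (hXmeas : Measurable X)
    (hXL2 : ∀ k, MemLp (fun ω => X ω k) 2 P)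
    (β : Fin p → ℝ)
    (ε : Ω → ℝ) (hεmeas : Measurable ε) (hεL2 : MemLp ε 2 P)
    (hεmean : ∫ ω, ε ω ∂P = 0) (hεindep : IndepFun ε X P)
    (Y : Ω → ℝ) (hYdef : ∀ ω, Y ω = (∑ k, β k * X ω k) + ε ω)
    (Sigm : Matrix (Fin p) (Fin p) ℝ)
    (hSigdef : ∀ k l, Sigm k l = cov P (fun ω => X ω k) (fun ω => X ω l))
    (hHerm : Sigm.IsHermitian) :
    ∀ γ > (0 : ℝ),
      (((Finset.univ : Finset (Fin p)).filter
            (fun k => γ ≤ |cov P (fun ω => X ω k) Y|)).card : ℝ)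
        ≤ ((Finset.univ : Finset (Fin p)).sup' ⟨⟨0, hp⟩, Finset.mem_univ _⟩
              hHerm.eigenvalues) * variance Y P / γ ^ 2 :=
  card_marginally_correlated_le_general P p hp X hXL2 β ε hεL2 hεindep Y hYdef Sigm hSigdef hHerm
end
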